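/- arXiv:math/0605145 — 3 statements merged into one kernel-verified Lean document; each statement's English description precedes it below -/
import Mathlib

section
/- If ψ : G → ℝ is a negative definite function, then for every t > 0 the function g ↦ e^{-tψ(g)} is positive definite (Schoenberg); in particular, for 0 < r < 1 the function g ↦ r^{ψ(g)} is positive definite. -/
/-!
For fixed `g₁, …, gₙ`, negative definiteness applied to the family extended by `g₀ = 1` with
weight `c₀ = -∑ cᵢ` shows that `Nᵢⱼ = ψ gᵢ + ψ gⱼ - ψ (gⱼ⁻¹ gᵢ) - ψ 1` is positive semidefinite.
By the Schur product theorem so are its entrywise powers, hence so is its entrywise exponential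
`exp (t N)`, a convergent sum of them with nonnegative coefficients. Finally
`exp (-t ψ (gⱼ⁻¹ gᵢ)) = exp (t ψ 1) · dᵢ · exp (t Nᵢⱼ) · dⱼ` with `dᵢ = exp (-t ψ gᵢ)` real, a
congruence by a diagonal matrix; and `r ^ ψ = exp (-(-log r) ψ)`.
-/

open scoped ComplexConjugate

/-- `φ : G → ℂ` is positive definite: for all `g₁,…,g_n` and `c₁,…,c_n`, the sum
`Σ_{i,j} c_i conj(c_j) φ(g_j⁻¹ g_i)` is a nonnegative real number. -/
def IsPosDef {G : Type*} [Group G] (φ : G → ℂ) : Prop :=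
  ∀ (n : ℕ) (g : Fin n → G) (c : Fin n → ℂ),
    0 ≤ (∑ i, ∑ j, c i * conj (c j) * φ ((g j)⁻¹ * g i)).re ∧
      (∑ i, ∑ j, c i * conj (c j) * φ ((g j)⁻¹ * g i)).im = 0

/-- `ψ : G → ℝ` is negative definite: `ψ(g⁻¹) = ψ(g)` and, whenever `Σ c_i = 0`,
the sum `Σ_{i,j} c_i conj(c_j) ψ(g_j⁻¹ g_i)` is a nonpositive real number. -/
def IsNegDef {G : Type*} [Group G] (ψ : G → ℝ) : Prop :=
  (∀ g : G, ψ g⁻¹ = ψ g) ∧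
    ∀ (n : ℕ) (g : Fin n → G) (c : Fin n → ℂ), (∑ i, c i) = 0 →
      (∑ i, ∑ j, c i * conj (c j) * (ψ ((g j)⁻¹ * g i) : ℂ)).re ≤ 0 ∧
        (∑ i, ∑ j, c i * conj (c j) * (ψ ((g j)⁻¹ * g i) : ℂ)).im = 0

open scoped ComplexOrder
open Matrix

namespace Matrix

theorem PosSemidef.map_pow {ι 𝕜 : Type*} [Finite ι] [RCLike 𝕜] {A : Matrix ι ι 𝕜}
    (hA : A.PosSemidef) : ∀ m : ℕ, (A.map (· ^ m)).PosSemidef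
  | 0 => by
    simpa [vecMulVec, Matrix.map] using posSemidef_vecMulVec_self_star (fun _ : ι => (1 : 𝕜))
  | m + 1 => by
    have hsucc : A.map (· ^ (m + 1)) = A.map (· ^ m) ⊙ A := by ext; simp [pow_succ]
    exact hsucc ▸ (hA.map_pow m).hadamard hA

theorem PosSemidef.map_exp {ι : Type*} [Fintype ι] {A : Matrix ι ι ℂ} (hA : A.PosSemidef) :
    (A.map Complex.exp).PosSemidef := by
  refine .of_dotProduct_mulVec_nonneg (hA.isHermitian.map _ fun z => ?_) fun x => ?_
  · simp [← Complex.exp_conj]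
  · have hsum : HasSum
        (fun m : ℕ => Complex.ofReal (m.factorial : ℝ)⁻¹ * (star x ⬝ᵥ A.map (· ^ m) *ᵥ x))
        (star x ⬝ᵥ A.map Complex.exp *ᵥ x) := by
      simp only [dotProduct, mulVec, map_apply, Finset.mul_sum]
      refine hasSum_sum fun i _ => hasSum_sum fun j _ => ?_
      have hexp : HasSum (fun m : ℕ => (m.factorial : ℝ)⁻¹ • A i j ^ m) (Complex.exp (A i j)) :=
        by simpa [Complex.exp_eq_exp_ℂ] using NormedSpace.exp_series_hasSum_exp' (𝕂 := ℝ) (A i j)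
      simpa [smul_eq_mul, mul_left_comm, mul_assoc] using
        (hexp.mul_right (x j)).mul_left (star x i)
    have hcoef : ∀ m : ℕ, (0 : ℂ) ≤ Complex.ofReal (m.factorial : ℝ)⁻¹ := fun m =>
      Complex.zero_le_real.mpr (inv_nonneg.mpr (Nat.cast_nonneg _))
    have hterm : ∀ m : ℕ, 0 ≤ star x ⬝ᵥ A.map (· ^ m) *ᵥ x := fun m =>
      (hA.map_pow m).dotProduct_mulVec_nonneg x
    exact HasSum.nonneg (fun m => mul_nonneg (hcoef m) (hterm m)) hsum

end Matrix

section

variable {G : Type*} [Group G]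

def kernelMatrix {α : Type*} (φ : G → α) {n : ℕ} (g : Fin n → G) : Matrix (Fin n) (Fin n) α :=
  Matrix.of fun i j => φ ((g j)⁻¹ * g i)

def pointedKernelMatrix (ψ : G → ℝ) {n : ℕ} (g : Fin n → G) : Matrix (Fin n) (Fin n) ℂ :=
  Matrix.of fun i j => ((ψ (g i) + ψ (g j) - ψ ((g j)⁻¹ * g i) - ψ 1 : ℝ) : ℂ)

theorem sum_mul_conj_mul_eq_dotProduct {ι : Type*} [Fintype ι] (M : Matrix ι ι ℂ) (c : ι → ℂ) :
    ∑ i, ∑ j, c i * conj (c j) * M i j = c ⬝ᵥ M *ᵥ star c := by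
  simp only [dotProduct, mulVec, Finset.mul_sum, Pi.star_apply, Complex.star_def]
  exact Finset.sum_congr rfl fun i _ => Finset.sum_congr rfl fun j _ => by ring

theorem isPosDef_of_posSemidef {φ : G → ℂ}
    (h : ∀ (n : ℕ) (g : Fin n → G), (kernelMatrix φ g).PosSemidef) : IsPosDef φ := by
  intro n g c
  have hc := (h n g).dotProduct_mulVec_nonneg (star c)
  rw [star_star, ← sum_mul_conj_mul_eq_dotProduct] at hc
  exact ⟨(Complex.nonneg_iff.mp hc).1, (Complex.nonneg_iff.mp hc).2.symm⟩

theorem IsNegDef.apply_inv_mul_comm {ψ : G → ℝ} (hψ : IsNegDef ψ) (a b : G) :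
    ψ (a⁻¹ * b) = ψ (b⁻¹ * a) := by
  rw [← hψ.1, _root_.mul_inv_rev, inv_inv]

theorem IsNegDef.dotProduct_nonpos {ψ : G → ℝ} (hψ : IsNegDef ψ) {n : ℕ} (g : Fin n → G)
    {c : Fin n → ℂ} (hc : ∑ i, c i = 0) :
    c ⬝ᵥ kernelMatrix (fun x => (ψ x : ℂ)) g *ᵥ star c ≤ 0 := by
  rw [← sum_mul_conj_mul_eq_dotProduct, Complex.le_def]
  exact hψ.2 n g c hc

theorem IsNegDef.dotProduct_pointedKernelMatrix {ψ : G → ℝ} (hψ : IsNegDef ψ) {n : ℕ}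
    (g : Fin n → G) (c : Fin n → ℂ) :
    c ⬝ᵥ pointedKernelMatrix ψ g *ᵥ star c =
      -(Fin.cons (-∑ i, c i) c ⬝ᵥ kernelMatrix (fun x => (ψ x : ℂ)) (Fin.cons 1 g) *ᵥ
        star (Fin.cons (-∑ i, c i) c : Fin (n + 1) → ℂ)) := by
  simp only [dotProduct, mulVec, Fin.sum_univ_succ, Fin.cons_zero, Fin.cons_succ, kernelMatrix,
    pointedKernelMatrix, of_apply, Pi.star_apply, inv_one, one_mul, mul_one, hψ.1]
  push_cast
  simp only [star_neg, star_sum, mul_add, add_mul, mul_sub, sub_mul, neg_mul, mul_neg,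
    Finset.sum_add_distrib, Finset.sum_sub_distrib, Finset.sum_neg_distrib, Finset.mul_sum,
    Finset.sum_mul]
  rw [Finset.sum_comm (f := fun x i => c i * ((ψ 1 : ℂ) * star (c x))),
    Finset.sum_comm (f := fun x i => c i * ((ψ (g x) : ℂ) * star (c x)))]
  ring

theorem IsNegDef.posSemidef_pointedKernelMatrix {ψ : G → ℝ} (hψ : IsNegDef ψ) {n : ℕ}
    (g : Fin n → G) : (pointedKernelMatrix ψ g).PosSemidef := by
  refine .of_dotProduct_mulVec_nonneg ?_ fun x => ?_
  · ext i j
    simp only [pointedKernelMatrix, conjTranspose_apply, of_apply, Complex.star_def,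
      Complex.conj_ofReal, hψ.apply_inv_mul_comm (g i)]
    ring_nf
  · have hext := hψ.dotProduct_nonpos (Fin.cons 1 g)
      (c := Fin.cons (-∑ i, star x i) (star x)) (by simp [Fin.sum_cons])
    have hx := hψ.dotProduct_pointedKernelMatrix g (star x)
    rw [star_star] at hx
    rw [hx]
    exact neg_nonneg.mpr hext

theorem IsNegDef.posSemidef_kernelMatrix_exp {ψ : G → ℝ} (hψ : IsNegDef ψ) {t : ℝ} (ht : 0 ≤ t)
    {n : ℕ} (g : Fin n → G) :
    (kernelMatrix (fun x => Complex.exp (-(t * ψ x))) g).PosSemidef := by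
  set D : Matrix (Fin n) (Fin n) ℂ := diagonal fun i => Complex.exp (-(t * ψ (g i)))
  have hD : Dᴴ = D := by
    simp [D, diagonal_conjTranspose, ← Complex.exp_conj]
  have hexp : kernelMatrix (fun x => Complex.exp (-(t * ψ x))) g =
      Complex.exp (t * ψ 1) • (D * ((t : ℂ) • pointedKernelMatrix ψ g).map Complex.exp * Dᴴ) := by
    ext i j
    simp only [hD, D, kernelMatrix, pointedKernelMatrix, of_apply, Matrix.smul_apply, diagonal_mul,
      mul_diagonal, map_apply, smul_eq_mul, ← Complex.exp_add]
    congr 1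
    push_cast
    ring
  have hscale : (0 : ℂ) ≤ Complex.exp (t * ψ 1) := by
    exact_mod_cast Complex.zero_le_real.mpr (Real.exp_nonneg (t * ψ 1))
  rw [hexp]
  exact (((hψ.posSemidef_pointedKernelMatrix g).smul (Complex.zero_le_real.mpr ht)).map_exp
    |>.mul_mul_conjTranspose_same D).smul hscale

end

/-- Schoenberg's theorem: if `ψ` is negative definite then `e^{-tψ}` is positive
definite for all `t > 0`; in particular `r^ψ` is positive definite for `0 < r < 1`. -/
theorem schoenberg {G : Type*} [Group G] (ψ : G → ℝ) (hψ : IsNegDef ψ) :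
    (∀ t : ℝ, 0 < t → IsPosDef fun g : G => Complex.exp (-(t * ψ g))) ∧
      (∀ r : ℝ, 0 < r → r < 1 → IsPosDef fun g : G => ((r ^ ψ g : ℝ) : ℂ)) := by
  have hexp (t : ℝ) (ht : 0 ≤ t) : IsPosDef fun g : G => Complex.exp (-(t * ψ g)) :=
    isPosDef_of_posSemidef fun _ g => hψ.posSemidef_kernelMatrix_exp ht g
  refine ⟨fun t ht => hexp t ht.le, fun r hr hr1 => ?_⟩
  have hrpow : (fun g : G => ((r ^ ψ g : ℝ) : ℂ)) =
      fun g => Complex.exp (-((-Real.log r : ℝ) * ψ g)) := by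
    funext g
    rw [Real.rpow_def_of_pos hr, Complex.ofReal_exp]
    push_cast
    ring_nf
  rw [hrpow]
  exact hexp _ (neg_nonneg.mpr (Real.log_nonpos hr.le hr1.le))
end

section
/- If L : G → [0,∞) is a negative definite function with L(e) = 0, then L^{1/2} is a length function on G: L^{1/2}(e) = 0, L^{1/2}(g⁻¹) = L^{1/2}(g), and L^{1/2}(gh) ≤ L^{1/2}(g) + L^{1/2}(h) for all g,h ∈ G. -/
open scoped ComplexConjugate

lemma negdef_key {G : Type*} [Group G] (L : G → ℝ) (hneg : IsNegDef L) (he : L 1 = 0)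
    (x y : G) (s t : ℝ) :
    s * t * L (x⁻¹ * y) ≤ s * (s + t) * L x + t * (s + t) * L y := by
  obtain ⟨hsym, hsum⟩ := hneg
  have h := (hsum 3 ![x, y, 1] ![(s : ℂ), t, -(s + t)] (by
    simp [Fin.sum_univ_three])).1
  simp [Fin.sum_univ_three, Complex.conj_ofReal, ← Complex.ofReal_neg,
    ← Complex.ofReal_add, ← Complex.ofReal_mul, Complex.ofReal_re,
    inv_mul_cancel, mul_one, inv_inv, he] at h
  have hxy : L (y⁻¹ * x) = L (x⁻¹ * y) := by
    rw [← hsym (y⁻¹ * x), mul_inv_rev, inv_inv]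
  rw [hxy, hsym, hsym] at h
  linarith

lemma negdef_sq {G : Type*} [Group G] (L : G → ℝ) (hL0 : ∀ g, 0 ≤ L g)
    (hneg : IsNegDef L) (he : L 1 = 0) (x y : G) :
    L (x⁻¹ * y) ≤ (Real.sqrt (L x) + Real.sqrt (L y)) ^ 2 := by
  set a := Real.sqrt (L x) with ha
  set b := Real.sqrt (L y) with hb
  have ha0 : 0 ≤ a := Real.sqrt_nonneg _
  have hb0 : 0 ≤ b := Real.sqrt_nonneg _
  have ha2 : a ^ 2 = L x := Real.sq_sqrt (hL0 x)
  have hb2 : b ^ 2 = L y := Real.sq_sqrt (hL0 y)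
  have H := negdef_key L hneg he x y
  rcases eq_or_lt_of_le ha0 with ha' | ha'
  · rcases eq_or_lt_of_le hb0 with hb' | hb'
    · have := H 1 1
      nlinarith [hL0 (x⁻¹ * y)]
    · by_contra hc
      push_neg at hc
      have hx0 : L x = 0 := by rw [← ha2, ← ha']; ring
      have ht := H (2 * b ^ 2) (L (x⁻¹ * y) - b ^ 2)
      have hbb : 0 < b ^ 2 := by positivity
      rw [hx0, ← hb2] at ht
      have hd : 0 < L (x⁻¹ * y) - b ^ 2 := by nlinarith [hc]
      nlinarith [ht, mul_pos (mul_pos hbb hd) hd]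
  · rcases eq_or_lt_of_le hb0 with hb' | hb'
    · by_contra hc
      push_neg at hc
      have hy0 : L y = 0 := by rw [← hb2, ← hb']; ring
      have ht := H (L (x⁻¹ * y) - a ^ 2) (2 * a ^ 2)
      have haa : 0 < a ^ 2 := by positivity
      rw [hy0, ← ha2] at ht
      have hd : 0 < L (x⁻¹ * y) - a ^ 2 := by nlinarith [hc]
      nlinarith [ht, mul_pos (mul_pos haa hd) hd]
    · have := H b a
      nlinarith [mul_pos ha' hb']

/-- If `L : G → [0,∞)` is negative definite with `L(e) = 0`, then `L^{1/2}` is a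
length function on `G`. -/
theorem sqrt_negdef_is_length {G : Type*} [Group G] (L : G → ℝ)
    (hL0 : ∀ g, 0 ≤ L g) (hneg : IsNegDef L) (he : L 1 = 0) :
    Real.sqrt (L 1) = 0 ∧ (∀ g : G, Real.sqrt (L g⁻¹) = Real.sqrt (L g)) ∧
      ∀ g h : G, Real.sqrt (L (g * h)) ≤ Real.sqrt (L g) + Real.sqrt (L h) := by
  refine ⟨by simp [he], fun g => by rw [hneg.1], fun g h => ?_⟩
  have key := negdef_sq L hL0 hneg he g⁻¹ h
  rw [inv_inv, hneg.1] at key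
  calc Real.sqrt (L (g * h)) ≤ Real.sqrt ((Real.sqrt (L g) + Real.sqrt (L h)) ^ 2) :=
        Real.sqrt_le_sqrt key
    _ = Real.sqrt (L g) + Real.sqrt (L h) := Real.sqrt_sq (by positivity)
end

section
/- Let {F_α} be a Følner net for a discrete group G, i.e., each F_α is a finite nonempty subset and |gF_α △ F_α|/|F_α| → 0 for every g ∈ G. Define φ_α(g) = |gF_α ∩ F_α|/|F_α|. Then each φ_α is a positive definite function on G with φ_α(e) = 1, the support of φ_α equals F_α · F_α⁻¹, and φ_α(g) → 1 for every g ∈ G. -/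
open scoped ComplexConjugate

open Filter

/-! The quadratic form `Σ c_i c̄_j φ_α(g_j⁻¹ g_i)` is `|F_α|⁻¹ Σ_x |Σ_i c_i 1_{g_i F_α}(x)|²`,
because `|g_j⁻¹ g_i F_α ∩ F_α| = |g_i F_α ∩ g_j F_α|` is the inner product of the indicator
functions of `g_i F_α` and `g_j F_α`. Pointwise convergence follows from
`0 ≤ 1 - φ_α(g) = |F_α \ g F_α| / |F_α| ≤ |g F_α △ F_α| / |F_α|`. -/

open Finset Topology
open scoped ComplexOrder Pointwise symmDiff

lemma isPosDef_iff_nonneg {G : Type*} [Group G] {φ : G → ℂ} :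
    IsPosDef φ ↔ ∀ (n : ℕ) (g : Fin n → G) (c : Fin n → ℂ),
      0 ≤ ∑ i, ∑ j, c i * conj (c j) * φ ((g j)⁻¹ * g i) := by
  simp only [IsPosDef, Complex.nonneg_iff, eq_comm]

lemma IsPosDef.const_mul {G : Type*} [Group G] {φ : G → ℂ} (hφ : IsPosDef φ) {r : ℂ}
    (hr : 0 ≤ r) : IsPosDef fun g => r * φ g := by
  rw [isPosDef_iff_nonneg] at hφ ⊢
  intro n g c
  have hsum : ∑ i, ∑ j, c i * conj (c j) * (r * φ ((g j)⁻¹ * g i)) =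
      r * ∑ i, ∑ j, c i * conj (c j) * φ ((g j)⁻¹ * g i) := by
    simp only [Finset.mul_sum, mul_left_comm r]
  rw [hsum]
  exact mul_nonneg hr (hφ n g c)

lemma gram_quadratic_form_nonneg {ι α : Type*} [Fintype ι] (S : Finset α) (u : ι → α → ℝ)
    (c : ι → ℂ) : 0 ≤ ∑ i, ∑ j, c i * conj (c j) * ∑ x ∈ S, ((u i x * u j x : ℝ) : ℂ) := by
  set a : α → ι → ℂ := fun x i => c i * u i x
  have hsq : ∑ i, ∑ j, c i * conj (c j) * ∑ x ∈ S, ((u i x * u j x : ℝ) : ℂ) =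
      ∑ x ∈ S, (∑ i, a x i) * conj (∑ j, a x j) := calc
    _ = ∑ i, ∑ j, ∑ x ∈ S, a x i * conj (a x j) := by
      refine sum_congr rfl fun i _ => sum_congr rfl fun j _ => ?_
      rw [mul_sum]
      refine sum_congr rfl fun x _ => ?_
      simp only [a, map_mul, Complex.conj_ofReal, Complex.ofReal_mul]
      ring
    _ = ∑ x ∈ S, ∑ i, ∑ j, a x i * conj (a x j) :=
      (sum_congr rfl fun i _ => sum_comm).trans sum_comm
    _ = _ := by simp only [map_sum, sum_mul_sum]
  rw [hsq]
  exact sum_nonneg fun x _ => mul_star_self_nonneg _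

lemma card_inter_eq_sum_mul_ite {α : Type*} [DecidableEq α] {s t S : Finset α} (hs : s ⊆ S) :
    (#(s ∩ t) : ℝ) = ∑ x ∈ S, (if x ∈ s then 1 else 0) * (if x ∈ t then 1 else 0) := by
  simp only [ite_zero_mul_ite_zero, one_mul, sum_boole]
  congr 2
  ext x
  simp only [mem_inter, mem_filter]
  exact ⟨fun h => ⟨hs h.1, h⟩, And.right⟩

section Translates

variable {G : Type*} [Group G] [DecidableEq G]

lemma card_inv_mul_smul_inter (s : Finset G) (a b : G) :
    #((a⁻¹ * b) • s ∩ s) = #(b • s ∩ a • s) := by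
  rw [← card_smul_finset a, smul_finset_inter, smul_smul, mul_inv_cancel_left]

lemma isPosDef_card_smul_inter (s : Finset G) : IsPosDef fun g : G => (#(g • s ∩ s) : ℂ) := by
  rw [isPosDef_iff_nonneg]
  intro n g c
  set S := univ.biUnion fun i => g i • s
  have hS : ∀ i, g i • s ⊆ S := fun i => subset_biUnion_of_mem (fun i => g i • s) (mem_univ i)
  have hcard : ∀ i j, (#(((g j)⁻¹ * g i) • s ∩ s) : ℂ) =
      ∑ x ∈ S, (((if x ∈ g i • s then 1 else 0) * (if x ∈ g j • s then 1 else 0) : ℝ) : ℂ) := by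
    intro i j
    rw [card_inv_mul_smul_inter, ← Complex.ofReal_natCast, card_inter_eq_sum_mul_ite (hS i),
      Complex.ofReal_sum]
  simp only [hcard]
  exact gram_quadratic_form_nonneg S _ c

lemma smul_inter_nonempty_iff_eq_mul_inv {s : Finset G} {g : G} :
    (g • s ∩ s).Nonempty ↔ ∃ a ∈ s, ∃ b ∈ s, g = a * b⁻¹ := by
  rw [← coe_nonempty, coe_inter, coe_smul_finset, Set.smul_inter_nonempty_iff]
  simp only [mem_coe, eq_comm (a := g)]
  constructor
  · rintro ⟨a, b, ⟨ha, hb⟩, rfl⟩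
    exact ⟨a, ha, b, hb, rfl⟩
  · rintro ⟨a, ha, b, hb, rfl⟩
    exact ⟨a, b, ⟨ha, hb⟩, rfl⟩

lemma card_smul_inter_div_card_le_one (s : Finset G) (g : G) :
    (#(g • s ∩ s) : ℝ) / #s ≤ 1 :=
  div_le_one_of_le₀ (by exact_mod_cast card_le_card inter_subset_right) (Nat.cast_nonneg _)

lemma one_sub_card_smul_inter_div_card_le {s : Finset G} (hs : s.Nonempty) (g : G) :
    1 - (#(g • s ∩ s) : ℝ) / #s ≤ #((g • s) ∆ s) / #s := by
  have hpos : (0 : ℝ) < #s := by exact_mod_cast hs.card_pos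
  have hsplit : #(s \ g • s) + #(g • s ∩ s) = #s := by
    rw [inter_comm]
    exact card_sdiff_add_card_inter s (g • s)
  have hsdiff : #(s \ g • s) ≤ #((g • s) ∆ s) :=
    card_le_card fun _ hx => mem_symmDiff.2 (Or.inr (mem_sdiff.1 hx))
  rw [one_sub_div hpos.ne']
  gcongr
  rw [sub_le_iff_le_add, ← hsplit]
  push_cast
  exact_mod_cast Nat.add_le_add_right hsdiff _

end Translates

theorem folner_net_gives_pd_approx_unit_general {G : Type*} [Group G] [DecidableEq G]
    {ι : Type*} (l : Filter ι) (F : ι → Finset G)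
    (hne : ∀ α, (F α).Nonempty)
    (hFol : ∀ g : G, Tendsto
      (fun α => ((symmDiff ((F α).image fun x => g * x) (F α)).card : ℝ) / (F α).card)
      l (nhds 0))
    (φ : ι → G → ℝ)
    (hφ : ∀ α (g : G),
      φ α g = ((((F α).image fun x => g * x) ∩ F α).card : ℝ) / (F α).card) :
    (∀ α, IsPosDef fun g : G => (φ α g : ℂ)) ∧
      (∀ α, φ α 1 = 1) ∧
      (∀ α (g : G), φ α g ≠ 0 ↔ ∃ s ∈ F α, ∃ t ∈ F α, g = s * t⁻¹) ∧
      (∀ g : G, Tendsto (fun α => φ α g) l (nhds 1)) := by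
  replace hφ : ∀ α g, φ α g = (#(g • F α ∩ F α) : ℝ) / #(F α) := hφ
  replace hFol : ∀ g : G, Tendsto (fun α => (#((g • F α) ∆ F α) : ℝ) / #(F α)) l (𝓝 0) := hFol
  have hcard α : (#(F α) : ℝ) ≠ 0 := Nat.cast_ne_zero.2 (hne α).card_ne_zero
  refine ⟨fun α => ?_, fun α => ?_, fun α g => ?_, fun g => ?_⟩
  · have hscale : (fun g => (φ α g : ℂ)) =
        fun g => (((#(F α) : ℝ)⁻¹ : ℝ) : ℂ) * #(g • F α ∩ F α) := by
      ext g
      rw [hφ]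
      push_cast
      exact div_eq_inv_mul _ _
    rw [hscale]
    exact (isPosDef_card_smul_inter _).const_mul (Complex.zero_le_real.2 (by positivity))
  · rw [hφ, one_smul, inter_self, div_self (hcard α)]
  · rw [hφ, div_ne_zero_iff, Nat.cast_ne_zero, card_ne_zero, ← smul_inter_nonempty_iff_eq_mul_inv]
    exact and_iff_left (hcard α)
  · have hlower : Tendsto (fun α => 1 - (#((g • F α) ∆ F α) : ℝ) / #(F α)) l (𝓝 1) := by
      simpa using (hFol g).const_sub 1
    refine tendsto_of_tendsto_of_tendsto_of_le_of_le hlower tendsto_const_nhds (fun α => ?_)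
      (fun α => ?_)
    · rw [hφ, sub_le_comm]
      exact one_sub_card_smul_inter_div_card_le (hne α) g
    · rw [hφ]
      exact card_smul_inter_div_card_le_one _ g

/-- For a Følner net `{F_α}` in `G`, the functions
`φ_α(g) = |gF_α ∩ F_α| / |F_α|` are normalized positive definite functions with
support `F_α · F_α⁻¹`, converging pointwise to `1`. -/
theorem folner_net_gives_pd_approx_unit {G : Type*} [Group G] [DecidableEq G]
    {ι : Type*} (l : Filter ι) [l.NeBot] (F : ι → Finset G)
    (hne : ∀ α, (F α).Nonempty)
    (hFol : ∀ g : G, Tendsto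
      (fun α => ((symmDiff ((F α).image fun x => g * x) (F α)).card : ℝ) / (F α).card)
      l (nhds 0))
    (φ : ι → G → ℝ)
    (hφ : ∀ α (g : G),
      φ α g = ((((F α).image fun x => g * x) ∩ F α).card : ℝ) / (F α).card) :
    (∀ α, IsPosDef fun g : G => (φ α g : ℂ)) ∧
      (∀ α, φ α 1 = 1) ∧
      (∀ α (g : G), φ α g ≠ 0 ↔ ∃ s ∈ F α, ∃ t ∈ F α, g = s * t⁻¹) ∧
      (∀ g : G, Tendsto (fun α => φ α g) l (nhds 1)) :=
  folner_net_gives_pd_approx_unit_general l F hne hFol φ hφ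
end
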